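/- arXiv:2210.16311 — 2 statements merged into one kernel-verified Lean document; each statement's English description precedes it below -/
import Mathlib

section
/- Let Γ^{[0,0]}, Γ^{[1,1]}, Γ^{[1,0]} be s×s real matrices and u ∈ (0, 1/2) such that ‖I − Γ^{[0,0]}‖_{op,ℓ∞} ≤ u, ‖I − Γ^{[1,1]}‖_{op,ℓ∞} ≤ u, ‖Γ^{[1,0]}‖_{op,ℓ∞} ≤ u, and ‖Γ^{[1,0]⊤}‖_{op,ℓ∞} ≤ u. Then the Schur complement Γ_{SC} = Γ^{[0,0]} − Γ^{[1,0]⊤}(Γ^{[1,1]})^{-1}Γ^{[1,0]} is well defined and invertible, and satisfies ‖I − Γ_{SC}‖_{op,ℓ∞} ≤ u/(1−u) and ‖Γ_{SC}^{-1}‖_{op,ℓ∞} ≤ (1−u)/(1−2u). -/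
open scoped BigOperators

/-- The operator norm on `s×s` real matrices induced by the sup norm on `ℝ^s`. -/
noncomputable def opNormLinf {s : ℕ} (A : Matrix (Fin s) (Fin s) ℝ) : ℝ :=
  ⨆ k, ∑ ℓ, |A k ℓ|

attribute [local instance] Matrix.linftyOpNormedRing Matrix.linftyOpNormedAlgebra

lemma opNormLinf_eq_norm {s : ℕ} (hs : 0 < s) (A : Matrix (Fin s) (Fin s) ℝ) :
    opNormLinf A = ‖A‖ := by
  have : Nonempty (Fin s) := ⟨⟨0, hs⟩⟩
  rw [Matrix.linfty_opNorm_def, opNormLinf]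
  have hf : ∀ k : Fin s, ∑ ℓ, |A k ℓ| = ((∑ ℓ, ‖A k ℓ‖₊ : NNReal) : ℝ) := by
    intro k
    push_cast
    exact Finset.sum_congr rfl fun ℓ _ => (Real.norm_eq_abs _).symm
  simp_rw [hf]
  apply le_antisymm
  · refine ciSup_le fun k => ?_
    exact_mod_cast Finset.le_sup (f := fun i => ∑ j, ‖A i j‖₊) (Finset.mem_univ k)
  · obtain ⟨k, _, hk⟩ := Finset.exists_mem_eq_sup (Finset.univ : Finset (Fin s))
      Finset.univ_nonempty (fun i => ∑ j, ‖A i j‖₊)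
    rw [hk]
    exact le_ciSup (f := fun k : Fin s => ((∑ ℓ, ‖A k ℓ‖₊ : NNReal) : ℝ))
      (Set.Finite.bddAbove (Set.finite_range _)) k

lemma one_sub_bound {R : Type*} [NormedRing R] [CompleteSpace R] [NormOneClass R]
    {t : R} {u : ℝ} (hu : u < 1) (h : ‖t‖ ≤ u) :
    IsUnit (1 - t) ∧ ‖Ring.inverse (1 - t)‖ ≤ (1 - u)⁻¹ := by
  have ht : ‖t‖ < 1 := lt_of_le_of_lt h hu
  refine ⟨isUnit_one_sub_of_norm_lt_one ht, ?_⟩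
  rw [← geom_series_eq_inverse t ht]
  have := tsum_geometric_le_of_norm_lt_one t ht
  rw [norm_one] at this
  have h2 : (1 - ‖t‖)⁻¹ ≤ (1 - u)⁻¹ := by
    apply inv_anti₀ (by linarith) (by linarith)
  linarith

/-- Under the bounds `‖I - Γ⁰⁰‖ ≤ u`, `‖I - Γ¹¹‖ ≤ u`, `‖Γ¹⁰‖ ≤ u`, `‖Γ¹⁰ᵀ‖ ≤ u` with
`u ∈ (0, 1/2)`, the Schur complement `Γ_SC = Γ⁰⁰ - Γ¹⁰ᵀ (Γ¹¹)⁻¹ Γ¹⁰` is well defined and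
invertible, with `‖I - Γ_SC‖ ≤ u/(1-u)` and `‖Γ_SC⁻¹‖ ≤ (1-u)/(1-2u)`. -/
theorem stmt8 {s : ℕ} (hs : 0 < s)
    (Γ00 Γ11 Γ10 : Matrix (Fin s) (Fin s) ℝ) (u : ℝ) (hu0 : 0 < u) (hu : u < 1 / 2)
    (h00 : opNormLinf (1 - Γ00) ≤ u) (h11 : opNormLinf (1 - Γ11) ≤ u)
    (h10 : opNormLinf Γ10 ≤ u) (h10t : opNormLinf Γ10.transpose ≤ u) :
    IsUnit Γ11 ∧
    IsUnit (Γ00 - Γ10.transpose * Γ11⁻¹ * Γ10) ∧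
    opNormLinf (1 - (Γ00 - Γ10.transpose * Γ11⁻¹ * Γ10)) ≤ u / (1 - u) ∧
    opNormLinf (Γ00 - Γ10.transpose * Γ11⁻¹ * Γ10)⁻¹ ≤ (1 - u) / (1 - 2 * u) := by
  have : Nonempty (Fin s) := ⟨⟨0, hs⟩⟩
  simp only [opNormLinf_eq_norm hs] at *
  have hu1 : u < 1 := by linarith
  -- Γ11 invertible
  have h11' : ‖(1 : Matrix (Fin s) (Fin s) ℝ) - Γ11‖ ≤ u := h11
  obtain ⟨hunit11, hinv11⟩ := one_sub_bound hu1 h11'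
  rw [sub_sub_cancel] at hunit11
  have hinv11' : ‖Γ11⁻¹‖ ≤ (1 - u)⁻¹ := by
    rw [Matrix.nonsing_inv_eq_ringInverse]
    rw [← sub_sub_cancel 1 Γ11]
    exact hinv11
  -- the Schur complement
  set S := Γ00 - Γ10.transpose * Γ11⁻¹ * Γ10 with hS
  have hkey : ‖(1 : Matrix (Fin s) (Fin s) ℝ) - S‖ ≤ u / (1 - u) := by
    have h1S : (1 : Matrix (Fin s) (Fin s) ℝ) - S
        = (1 - Γ00) + Γ10.transpose * Γ11⁻¹ * Γ10 := by rw [hS]; abel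
    rw [h1S]
    calc ‖(1 - Γ00) + Γ10.transpose * Γ11⁻¹ * Γ10‖
        ≤ ‖(1 : Matrix (Fin s) (Fin s) ℝ) - Γ00‖ + ‖Γ10.transpose * Γ11⁻¹ * Γ10‖ :=
          norm_add_le _ _
      _ ≤ u + ‖Γ10.transpose‖ * ‖Γ11⁻¹‖ * ‖Γ10‖ := by
          refine add_le_add h00 ?_
          calc ‖Γ10.transpose * Γ11⁻¹ * Γ10‖ ≤ ‖Γ10.transpose * Γ11⁻¹‖ * ‖Γ10‖ :=
                norm_mul_le _ _
            _ ≤ ‖Γ10.transpose‖ * ‖Γ11⁻¹‖ * ‖Γ10‖ := by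
                gcongr; exact norm_mul_le _ _
      _ ≤ u + u * (1 - u)⁻¹ * u := by
          have h1 : ‖Γ10.transpose‖ * ‖Γ11⁻¹‖ * ‖Γ10‖ ≤ u * (1 - u)⁻¹ * u := by
            exact mul_le_mul (mul_le_mul h10t hinv11' (norm_nonneg _) hu0.le) h10
              (norm_nonneg _) (mul_nonneg hu0.le (inv_nonneg.mpr (by linarith)))
          linarith
      _ = u / (1 - u) := by
          have h1u : (1:ℝ) - u ≠ 0 := by linarith
          field_simp
          ring
  have hlt : u / (1 - u) < 1 := by
    rw [div_lt_one (by linarith)]; linarith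
  obtain ⟨hunitS, hinvS⟩ := one_sub_bound hlt hkey
  rw [sub_sub_cancel] at hunitS
  refine ⟨hunit11, hunitS, hkey, ?_⟩
  rw [Matrix.nonsing_inv_eq_ringInverse]
  have h1u : (1:ℝ) - u ≠ 0 := by linarith
  have h2u : (1:ℝ) - 2 * u ≠ 0 := by linarith
  have hq : 1 - u / (1 - u) = (1 - 2 * u) / (1 - u) := by field_simp; ring
  calc ‖Ring.inverse S‖ = ‖Ring.inverse (1 - (1 - S))‖ := by rw [sub_sub_cancel]
    _ ≤ (1 - u / (1 - u))⁻¹ := hinvS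
    _ = (1 - u) / (1 - 2 * u) := by rw [hq, inv_div]
end

section
/- For any τ > 1 and n ≥ 1, if κ² ≥ (n+1)·(1 + √(1 + log(τ)/n))², then exp(−κ²(1 − 2√(n/κ²))) ≤ 1/τ. That is, the chi-squared-type tail function f_n evaluated at κ² is at most 1/τ. -/
/-- For `τ > 1` and `n ≥ 1`, if `κ² ≥ (n+1)(1 + √(1 + log τ / n))²` then
`f_n(κ²) = exp(−κ²(1 − 2√(n/κ²))) ≤ 1/τ`. -/
theorem stmt12 (n : ℕ) (hn : 1 ≤ n) (τ : ℝ) (hτ : 1 < τ) (κ : ℝ)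
    (hκ : ((n : ℝ) + 1) * (1 + Real.sqrt (1 + Real.log τ / n)) ^ 2 ≤ κ ^ 2) :
    Real.exp (-(κ ^ 2 * (1 - 2 * Real.sqrt ((n : ℝ) / κ ^ 2)))) ≤ 1 / τ := by
  set L := Real.log τ with hLdef
  have hL0 : 0 < L := Real.log_pos hτ
  have hn1 : (1 : ℝ) ≤ (n : ℝ) := by exact_mod_cast hn
  have hnpos : (0 : ℝ) < (n : ℝ) := by linarith
  set s := Real.sqrt (1 + L / n) with hs
  have hs0 : 0 ≤ s := Real.sqrt_nonneg _
  have hx0 : 0 < κ ^ 2 := by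
    refine lt_of_lt_of_le ?_ hκ
    have : (0:ℝ) < 1 + s := by linarith
    positivity
  set a := Real.sqrt (κ ^ 2) with ha
  have ha2 : a ^ 2 = κ ^ 2 := Real.sq_sqrt (le_of_lt hx0)
  have ha0 : 0 < a := Real.sqrt_pos.2 hx0
  -- s = √(n+L)/√n
  have hsval : s = Real.sqrt ((n : ℝ) + L) / Real.sqrt n := by
    rw [hs, show (1 + L / n) = ((n : ℝ) + L) / n by field_simp,
      Real.sqrt_div (by positivity)]
  have hsqn_pos : 0 < Real.sqrt (n : ℝ) := Real.sqrt_pos.2 hnpos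
  have hsqnL0 : 0 ≤ Real.sqrt ((n : ℝ) + L) := Real.sqrt_nonneg _
  -- a ≥ √n + √(n+L)
  have hkey : Real.sqrt (n : ℝ) + Real.sqrt ((n : ℝ) + L) ≤ a := by
    have h1 : Real.sqrt (((n : ℝ) + 1) * (1 + s) ^ 2) ≤ a :=
      Real.sqrt_le_sqrt hκ
    have h2 : Real.sqrt (((n : ℝ) + 1) * (1 + s) ^ 2)
        = Real.sqrt ((n : ℝ) + 1) * (1 + s) := by
      rw [Real.sqrt_mul (by positivity), Real.sqrt_sq (by linarith)]
    have h3 : Real.sqrt (n : ℝ) ≤ Real.sqrt ((n : ℝ) + 1) :=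
      Real.sqrt_le_sqrt (by linarith)
    have h4 : Real.sqrt ((n : ℝ) + L) ≤ Real.sqrt ((n : ℝ) + 1) * s := by
      rw [hsval, mul_div_assoc', le_div_iff₀ hsqn_pos]
      nlinarith
    calc Real.sqrt (n : ℝ) + Real.sqrt ((n : ℝ) + L)
        ≤ Real.sqrt ((n:ℝ)+1) + Real.sqrt ((n:ℝ)+1) * s := by linarith
      _ = Real.sqrt (((n : ℝ) + 1) * (1 + s) ^ 2) := by rw [h2]; ring
      _ ≤ a := h1
  -- hence κ² - 2√n·a ≥ L
  have hmain : L ≤ κ ^ 2 - 2 * Real.sqrt (n : ℝ) * a := by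
    have h5 : (n : ℝ) + L ≤ (a - Real.sqrt n) ^ 2 := by
      have h6 : Real.sqrt ((n:ℝ) + L) ≤ a - Real.sqrt n := by linarith
      have h7 := Real.sq_sqrt (show (0:ℝ) ≤ (n:ℝ) + L by linarith)
      nlinarith
    have h8 := Real.sq_sqrt hnpos.le
    nlinarith
  -- rewrite the exponent
  have hrw : κ ^ 2 * (1 - 2 * Real.sqrt ((n : ℝ) / κ ^ 2))
      = κ ^ 2 - 2 * Real.sqrt (n : ℝ) * a := by
    rw [Real.sqrt_div hnpos.le, ← ha]
    field_simp
    nlinarith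
  rw [hrw, ← Real.exp_log (show (0:ℝ) < 1/τ by positivity),
    Real.exp_le_exp, one_div, Real.log_inv]
  linarith
end
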